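/- The two 7-dimensional real Lie algebras g₇⁹ and g₇¹⁰ are not isomorphic. -/

import Mathlib

open Module

/-- The `k`-th standard coordinate vector in `ℝ⁷`. -/
def e7 (k : Fin 7) : Fin 7 → ℝ := Pi.single k 1

/-- Structure constants (for `i < j`) of `g₇⁹`, basis `X₁,…,X₇` numbered `0,…,6`. -/
def c79 (i j : Fin 7) : Fin 7 → ℝ :=
  if (i, j) = (0, 1) then e7 2
  else if (i, j) = (0, 2) then e7 3
  else if (i, j) = (1, 2) then e7 4
  else if (i, j) = (0, 5) then e7 1
  else if (i, j) = (1, 5) then -e7 0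
  else if (i, j) = (3, 5) then e7 4
  else if (i, j) = (4, 5) then -e7 3
  else if (i, j) = (0, 6) then -e7 0
  else if (i, j) = (1, 6) then -e7 1
  else if (i, j) = (2, 6) then (-2 : ℝ) • e7 2
  else if (i, j) = (3, 6) then (-3 : ℝ) • e7 3
  else if (i, j) = (4, 6) then (-3 : ℝ) • e7 4
  else 0

/-- Structure constants (for `i < j`) of `g₇¹⁰`, basis `X₁,…,X₇` numbered `0,…,6`. -/
def c710 (i j : Fin 7) : Fin 7 → ℝ :=
  if (i, j) = (0, 1) then e7 2
  else if (i, j) = (0, 4) then -e7 0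
  else if (i, j) = (1, 4) then -e7 1
  else if (i, j) = (2, 4) then (-2 : ℝ) • e7 2
  else if (i, j) = (0, 5) then e7 1
  else if (i, j) = (1, 5) then -e7 0
  else if (i, j) = (3, 6) then -e7 3
  else 0

/-!
The derived algebra `[𝔤, 𝔤]` is an isomorphism invariant. In `g₇⁹` it is spanned by
`X₁, …, X₅`, in `g₇¹⁰` by `X₁, …, X₄`: the structure constants show that every bracket lies in that
span, and each of these basis vectors is, up to sign, a single bracket (`X₁ = [X₇, X₁]`,
`X₃ = [X₁, X₂]`, …). So the derived algebras have dimensions `5 ≠ 4`.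
-/

open LieAlgebra

section Module

variable {R M ι : Type*}

theorem Module.Basis.sum_smul_mem_span_image [Semiring R] [AddCommMonoid M] [Module R M]
    [Fintype ι] (b : Basis ι R M) {s : Set ι} {c : ι → R} (hc : ∀ k ∉ s, c k = 0) :
    ∑ k, c k • b k ∈ Submodule.span R (b '' s) := by
  refine Submodule.sum_mem _ fun k _ => ?_
  by_cases hk : k ∈ s
  · exact Submodule.smul_mem _ _ (Submodule.subset_span ⟨k, hk, rfl⟩)
  · simp [hc k hk]

theorem Module.Basis.finrank_span_image [Ring R] [StrongRankCondition R] [AddCommGroup M]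
    [Module R M] (b : Basis ι R M) (s : Finset ι) :
    finrank R (Submodule.span R (b '' s)) = s.card := by
  have := nontrivial_of_invariantBasisNumber R
  rw [Set.image_eq_range]
  exact (finrank_span_eq_card (b.linearIndependent.comp _ Subtype.val_injective)).trans (by simp)

end Module

section Lie

variable {R L L' : Type*} [CommRing R] [LieRing L] [LieAlgebra R L] [LieRing L'] [LieAlgebra R L']

theorem LieEquiv.finrank_derivedSeries_eq (e : L ≃ₗ⁅R⁆ L') (k : ℕ) :
    finrank R (derivedSeries R L k : Submodule R L) =
      finrank R (derivedSeries R L' k : Submodule R L') := by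
  rw [LieIdeal.toLieSubalgebra_toSubmodule, LieIdeal.toLieSubalgebra_toSubmodule,
    ← LieIdeal.derivedSeries_map_eq k (f := e.toLieHom) e.surjective,
    LieIdeal.coe_map_of_surjective e.surjective]
  exact (LinearEquiv.finrank_map_eq e.toLinearEquiv _).symm

theorem Module.Basis.lie_mem_of_forall_lt {ι : Type*} [LinearOrder ι] (b : Basis ι R L)
    {S : Submodule R L} (h : ∀ i j, i < j → ⁅b i, b j⁆ ∈ S) (x y : L) : ⁅x, y⁆ ∈ S := by
  let B : L →ₗ[R] L →ₗ[R] L :=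
    LinearMap.mk₂ R (fun x y => ⁅x, y⁆) add_lie smul_lie lie_add lie_smul
  have hB : B.compr₂ S.mkQ = 0 := by
    refine LinearMap.ext_basis b b fun i j => ?_
    simp only [LinearMap.compr₂_apply, LinearMap.zero_apply, Submodule.mkQ_apply,
      Submodule.Quotient.mk_eq_zero]
    rcases lt_trichotomy i j with hij | rfl | hij
    · exact h i j hij
    · simp [B]
    · rw [LinearMap.mk₂_apply, ← lie_skew]
      exact S.neg_mem (h j i hij)
  simpa [B] using LinearMap.congr_fun₂ hB x y

theorem Module.Basis.derivedSeries_one_eq_span_image {ι : Type*} [LinearOrder ι]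
    (b : Basis ι R L) (s : Set ι) (hlie : ∀ i j, i < j → ⁅b i, b j⁆ ∈ Submodule.span R (b '' s))
    (hmem : ∀ k ∈ s, b k ∈ derivedSeries R L 1) :
    (derivedSeries R L 1 : Submodule R L) = Submodule.span R (b '' s) := by
  refine le_antisymm ?_ (Submodule.span_le.mpr ?_)
  · rw [coe_derivedSeries_one_eq, Submodule.span_le]
    rintro _ ⟨x, y, rfl⟩
    exact b.lie_mem_of_forall_lt hlie x y
  · rintro _ ⟨k, hk, rfl⟩
    exact hmem k hk

theorem mem_derivedSeries_one_of_lie_eq_smul {x y z : L} {r : R} (hr : IsUnit r)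
    (h : ⁅x, y⁆ = r • z) : z ∈ derivedSeries R L 1 := by
  obtain ⟨u, rfl⟩ := hr
  rw [← LieSubmodule.mem_toSubmodule, ← Submodule.smul_mem_iff' _ u, Units.smul_def, ← h]
  exact LieSubmodule.lie_mem_lie (LieSubmodule.mem_top x) (LieSubmodule.mem_top y)

end Lie

section StructureConstants

variable {L : Type*} [LieRing L] [LieAlgebra ℝ L] (b : Basis (Fin 7) ℝ L)

theorem c79_apply_eq_zero_of_five_le (i j : Fin 7) {k : Fin 7} (hk : 5 ≤ k) : c79 i j k = 0 := by
  obtain rfl | rfl : k = 5 ∨ k = 6 := by omega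
  all_goals simp [c79, ite_apply, e7]

theorem c710_apply_eq_zero_of_four_le (i j : Fin 7) {k : Fin 7} (hk : 4 ≤ k) :
    c710 i j k = 0 := by
  obtain rfl | rfl | rfl : k = 4 ∨ k = 5 ∨ k = 6 := by omega
  all_goals simp [c710, ite_apply, e7]

theorem finrank_derivedSeries_one_of_c79
    (h : ∀ i j : Fin 7, i < j → ⁅b i, b j⁆ = ∑ k, c79 i j k • b k) :
    finrank ℝ (derivedSeries ℝ L 1 : Submodule ℝ L) = 5 := by
  have hmem : ∀ k ∈ Finset.Iio (5 : Fin 7), b k ∈ derivedSeries ℝ L 1 := by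
    intro k hk
    fin_cases k <;> simp at hk
    · exact mem_derivedSeries_one_of_lie_eq_smul isUnit_one.neg
        (by simp [h 0 6 (by decide), c79, e7] : ⁅b 0, b 6⁆ = (-1 : ℝ) • b 0)
    · exact mem_derivedSeries_one_of_lie_eq_smul isUnit_one.neg
        (by simp [h 1 6 (by decide), c79, e7] : ⁅b 1, b 6⁆ = (-1 : ℝ) • b 1)
    · exact mem_derivedSeries_one_of_lie_eq_smul isUnit_one
        (by simp [h 0 1 (by decide), c79, e7] : ⁅b 0, b 1⁆ = (1 : ℝ) • b 2)
    · exact mem_derivedSeries_one_of_lie_eq_smul isUnit_one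
        (by simp [h 0 2 (by decide), c79, e7] : ⁅b 0, b 2⁆ = (1 : ℝ) • b 3)
    · exact mem_derivedSeries_one_of_lie_eq_smul isUnit_one
        (by simp [h 1 2 (by decide), c79, e7] : ⁅b 1, b 2⁆ = (1 : ℝ) • b 4)
  have hlie (i j : Fin 7) (hij : i < j) :
      ⁅b i, b j⁆ ∈ Submodule.span ℝ (b '' (Finset.Iio (5 : Fin 7) : Set (Fin 7))) :=
    h i j hij ▸ b.sum_smul_mem_span_image fun k hk =>
      c79_apply_eq_zero_of_five_le i j (by simpa using hk)
  rw [b.derivedSeries_one_eq_span_image _ hlie hmem, b.finrank_span_image]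
  rfl

theorem finrank_derivedSeries_one_of_c710
    (h : ∀ i j : Fin 7, i < j → ⁅b i, b j⁆ = ∑ k, c710 i j k • b k) :
    finrank ℝ (derivedSeries ℝ L 1 : Submodule ℝ L) = 4 := by
  have hmem : ∀ k ∈ Finset.Iio (4 : Fin 7), b k ∈ derivedSeries ℝ L 1 := by
    intro k hk
    fin_cases k <;> simp at hk
    · exact mem_derivedSeries_one_of_lie_eq_smul isUnit_one.neg
        (by simp [h 0 4 (by decide), c710, e7] : ⁅b 0, b 4⁆ = (-1 : ℝ) • b 0)
    · exact mem_derivedSeries_one_of_lie_eq_smul isUnit_one.neg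
        (by simp [h 1 4 (by decide), c710, e7] : ⁅b 1, b 4⁆ = (-1 : ℝ) • b 1)
    · exact mem_derivedSeries_one_of_lie_eq_smul isUnit_one
        (by simp [h 0 1 (by decide), c710, e7] : ⁅b 0, b 1⁆ = (1 : ℝ) • b 2)
    · exact mem_derivedSeries_one_of_lie_eq_smul isUnit_one.neg
        (by simp [h 3 6 (by decide), c710, e7] : ⁅b 3, b 6⁆ = (-1 : ℝ) • b 3)
  have hlie (i j : Fin 7) (hij : i < j) :
      ⁅b i, b j⁆ ∈ Submodule.span ℝ (b '' (Finset.Iio (4 : Fin 7) : Set (Fin 7))) :=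
    h i j hij ▸ b.sum_smul_mem_span_image fun k hk =>
      c710_apply_eq_zero_of_four_le i j (by simpa using hk)
  rw [b.derivedSeries_one_eq_span_image _ hlie hmem, b.finrank_span_image]
  rfl

end StructureConstants

theorem g79_vs_g710 {g₁ : Type} [LieRing g₁] [LieAlgebra ℝ g₁] (b₁ : Basis (Fin 7) ℝ g₁)
    (h₁ : ∀ i j : Fin 7, i < j → ⁅b₁ i, b₁ j⁆ = ∑ k, c79 i j k • b₁ k)
    {g₂ : Type} [LieRing g₂] [LieAlgebra ℝ g₂] (b₂ : Basis (Fin 7) ℝ g₂)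
    (h₂ : ∀ i j : Fin 7, i < j → ⁅b₂ i, b₂ j⁆ = ∑ k, c710 i j k • b₂ k) :
    IsEmpty (g₁ ≃ₗ⁅ℝ⁆ g₂) := by
  refine ⟨fun e => ?_⟩
  have h := e.finrank_derivedSeries_eq 1
  rw [finrank_derivedSeries_one_of_c79 b₁ h₁, finrank_derivedSeries_one_of_c710 b₂ h₂] at h
  exact absurd h (by decide)
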